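/- arXiv:1603.06913 — 6 statements merged into one kernel-verified Lean document; each statement's English description precedes it below -/
import Mathlib

section
/- Let (G/K, g) be a reductive homogeneous Riemannian space with decomposition g = k ⊕ m, B a fixed Ad(G)-invariant inner product on m, and Λ the positive definite symmetric Ad(K)-equivariant operator on m with ⟨x,y⟩ = B(Λx, y). For a ∈ k and x ∈ m, the following are equivalent: (i) [a + x, Λx] ∈ k; (ii) ⟨[a,x], y⟩ = ⟨x, [x,y]_m⟩ for all y ∈ m; (iii) ⟨[a+x, y]_m, x⟩ = 0 for all y ∈ m. -/
/-- Proposition 1 (equivalences (2) ⟺ (3) ⟺ (4)) for a reductive homogeneous Riemannian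
space `G/K`:  `g = k ⊕ m` is a reductive decomposition of the Lie algebra `g` of `G`,
`B` an `Ad`-invariant inner product on `g`, `p : g → m` the `B`-orthogonal projection,
and `Λ : m → m` the `B`-symmetric positive definite `Ad(K)`-equivariant operator defining
the invariant metric `⟨x,y⟩ = B(Λx, y)` on `m`.  For `a ∈ k`, `x ∈ m` the following are
equivalent:
(i) `[a + x, Λx] ∈ k`;
(ii) `⟨[a,x], y⟩ = ⟨x, [x,y]_m⟩` for all `y ∈ m`;
(iii) `⟨[a + x, y]_m, x⟩ = 0` for all `y ∈ m`. -/
theorem stmt5 {g : Type*} [LieRing g] [LieAlgebra ℝ g]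
    (B : g →ₗ[ℝ] g →ₗ[ℝ] ℝ)
    (hBsymm : ∀ u v : g, B u v = B v u)
    (hBpos : ∀ u : g, u ≠ 0 → 0 < B u u)
    (hBinv : ∀ z u v : g, B ⁅z, u⁆ v = -B u ⁅z, v⁆)
    (k m : Submodule ℝ g) (hcompl : IsCompl k m)
    (hksub : ∀ a ∈ k, ∀ b ∈ k, ⁅a, b⁆ ∈ k)
    (hred : ∀ a ∈ k, ∀ x ∈ m, ⁅a, x⁆ ∈ m)
    (horth : ∀ a ∈ k, ∀ x ∈ m, B a x = 0)
    (p : g →ₗ[ℝ] g)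
    (hpm : ∀ z : g, p z ∈ m) (hpid : ∀ x ∈ m, p x = x) (hpk : ∀ a ∈ k, p a = 0)
    (Λ : g →ₗ[ℝ] g)
    (hΛm : ∀ x ∈ m, Λ x ∈ m)
    (hΛsymm : ∀ x ∈ m, ∀ y ∈ m, B (Λ x) y = B x (Λ y))
    (hΛpos : ∀ x ∈ m, x ≠ 0 → 0 < B (Λ x) x)
    (hΛequiv : ∀ a ∈ k, ∀ x ∈ m, Λ ⁅a, x⁆ = ⁅a, Λ x⁆)
    (a : g) (ha : a ∈ k) (x : g) (hx : x ∈ m) :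
    ((⁅a + x, Λ x⁆ ∈ k) ↔
      (∀ y ∈ m, B (Λ ⁅a, x⁆) y = B (Λ x) (p ⁅x, y⁆))) ∧
    ((⁅a + x, Λ x⁆ ∈ k) ↔
      (∀ y ∈ m, B (Λ (p ⁅a + x, y⁆)) x = 0)) := by

  have hsub : ∀ z : g, z - p z ∈ k := by
    intro z
    have hz : z ∈ k ⊔ m := by rw [hcompl.sup_eq_top]; trivial
    obtain ⟨u, hu, v, hv, huv⟩ := Submodule.mem_sup.mp hz
    have hpz : p z = v := by
      rw [← huv, map_add, hpk u hu, hpid v hv, zero_add]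
    rw [hpz, ← huv]
    simpa using hu
  have hproj : ∀ z : g, ∀ y ∈ m, B z y = B (p z) y := by
    intro z y hy
    have h0 := horth (z - p z) (hsub z) y hy
    simp only [map_sub, LinearMap.sub_apply] at h0
    linarith
  have hproj2 : ∀ u ∈ m, ∀ z : g, B u (p z) = B u z := by
    intro u hu z
    rw [hBsymm, ← hproj z u hu, hBsymm]
  have hmemk : ∀ z : g, z ∈ k ↔ ∀ y ∈ m, B z y = 0 := by
    intro z
    constructor
    · exact fun hz y hy => horth z hz y hy
    · intro h
      have hpz : p z = 0 := by
        by_contra hne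
        have h1 := hBpos (p z) hne
        have h2 : B z (p z) = 0 := h (p z) (hpm z)
        rw [hproj z (p z) (hpm z)] at h2
        linarith
      have h3 := hsub z
      rwa [hpz, sub_zero] at h3
  have key : ∀ y : g, B ⁅a + x, Λ x⁆ y = -B (Λ x) ⁅a + x, y⁆ :=
    fun y => hBinv (a + x) (Λ x) y
  have e2 : ∀ y ∈ m,
      (B (Λ ⁅a, x⁆) y = B (Λ x) (p ⁅x, y⁆)) ↔ B ⁅a + x, Λ x⁆ y = 0 := by
    intro y hy
    rw [hΛequiv a ha x hx, hBinv a (Λ x) y, hproj2 (Λ x) (hΛm x hx) ⁅x, y⁆,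
      key y, add_lie, map_add]
    constructor <;> intro h <;> linarith
  have e3 : ∀ y ∈ m,
      (B (Λ (p ⁅a + x, y⁆)) x = 0) ↔ B ⁅a + x, Λ x⁆ y = 0 := by
    intro y hy
    rw [hΛsymm (p ⁅a + x, y⁆) (hpm _) x hx, ← hproj ⁅a + x, y⁆ (Λ x) (hΛm x hx),
      hBsymm, key y]
    constructor <;> intro h <;> linarith
  constructor
  · rw [hmemk]
    exact ⟨fun h y hy => (e2 y hy).mpr (h y hy), fun h y hy => (e2 y hy).mp (h y hy)⟩
  · rw [hmemk]
    exact ⟨fun h y hy => (e3 y hy).mpr (h y hy), fun h y hy => (e3 y hy).mp (h y hy)⟩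
end

section
/- Let λ₁, λ₂, λ₃ be positive reals with λ₁ = λ₂ ≠ λ₃ and let (a,b,c) ∈ ℝ³ be nonzero. Then the vector a·(i h) + b·X + c·Y ∈ su(2) is a geodesic vector for the left-invariant metric (λ₁, λ₂, λ₃) if and only if c = 0 or (a = 0 and b = 0). -/
/-- The Lie bracket of `su(2)` in coordinates with respect to the basis
`i·h, X, Y` (satisfying `[i h, X] = Y`, `[i h, Y] = -X`, `[X, Y] = i h`):
a vector `(a,b,c)` stands for `a·(i h) + b·X + c·Y`. -/
def su2Bracket (u v : ℝ × ℝ × ℝ) : ℝ × ℝ × ℝ :=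
  (u.2.1 * v.2.2 - v.2.1 * u.2.2,
   -(u.1 * v.2.2 - v.1 * u.2.2),
   u.1 * v.2.1 - v.1 * u.2.1)

/-- The left-invariant metric `(λ₁, λ₂, λ₃)` on `su(2)`: the summands
`m₁ = span{i h}`, `m₂ = span{X}`, `m₃ = span{Y}` are `B`-orthonormal and get scaled by the `λᵢ`. -/
def su2Metric (l1 l2 l3 : ℝ) (u v : ℝ × ℝ × ℝ) : ℝ :=
  l1 * u.1 * v.1 + l2 * u.2.1 * v.2.1 + l3 * u.2.2 * v.2.2

/-- `Z` is a geodesic vector iff `⟨[Z,W], Z⟩ = 0` for all `W`. -/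
def IsGeodesicVectorSU2 (l1 l2 l3 : ℝ) (Z : ℝ × ℝ × ℝ) : Prop :=
  ∀ W : ℝ × ℝ × ℝ, su2Metric l1 l2 l3 (su2Bracket Z W) Z = 0

/-- For `λ₁ = λ₂ ≠ λ₃` positive and `(a,b,c) ≠ 0`, the vector `a·(i h) + b·X + c·Y`
is a geodesic vector iff `c = 0` or `a = b = 0`. -/
theorem stmt12 (l1 l2 l3 : ℝ) (h1 : 0 < l1) (h2 : 0 < l2) (h3 : 0 < l3)
    (h12 : l1 = l2) (h23 : l2 ≠ l3) (a b c : ℝ) (hZ : (a, b, c) ≠ (0, 0, 0)) :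
    IsGeodesicVectorSU2 l1 l2 l3 (a, b, c) ↔ (c = 0 ∨ (a = 0 ∧ b = 0)) := by
  constructor
  · intro h
    have e1 := h (1, 0, 0)
    have e2 := h (0, 1, 0)
    simp only [su2Metric, su2Bracket, IsGeodesicVectorSU2] at e1 e2
    -- e1: b*c*(l2-l3)=0, e2: a*c*(l3-l1)=0
    have hbc : b * c = 0 := by
      have hne : l2 - l3 ≠ 0 := sub_ne_zero.mpr h23
      have : b * c * (l2 - l3) = 0 := by nlinarith [e1]
      exact (mul_eq_zero.mp this).resolve_right hne
    have hac : a * c = 0 := by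
      have hne : l3 - l1 ≠ 0 := sub_ne_zero.mpr (by rw [h12]; exact h23.symm)
      have : a * c * (l3 - l1) = 0 := by nlinarith [e2]
      exact (mul_eq_zero.mp this).resolve_right hne
    rcases mul_eq_zero.mp hbc with hb | hc
    · rcases mul_eq_zero.mp hac with ha | hc
      · by_cases hcz : c = 0
        · exact Or.inl hcz
        · exact Or.inr ⟨ha, hb⟩
      · exact Or.inl hc
    · exact Or.inl hc
  · intro h W
    simp only [su2Metric, su2Bracket]
    rcases h with hc | ⟨ha, hb⟩
    · subst hc h12; ring
    · subst ha hb h12; ring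
end

section
/- Let λ₁, λ₂, λ₃ > 0 be pairwise distinct and (a,b,c) ∈ ℝ³ nonzero. The vector a·(i h) + b·X + c·Y ∈ su(2) is a geodesic vector for the left-invariant metric (λ₁, λ₂, λ₃) if and only if it lies in one of the coordinate axes, i.e. exactly one of a, b, c is possibly nonzero. -/
/-- For pairwise distinct positive `λ₁, λ₂, λ₃` and `(a,b,c) ≠ 0`, the vector
`a·(i h) + b·X + c·Y` is a geodesic vector iff it lies on a coordinate axis. -/
theorem stmt13 (l1 l2 l3 : ℝ) (h1 : 0 < l1) (h2 : 0 < l2) (h3 : 0 < l3)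
    (h12 : l1 ≠ l2) (h13 : l1 ≠ l3) (h23 : l2 ≠ l3) (a b c : ℝ) (hZ : (a, b, c) ≠ (0, 0, 0)) :
    IsGeodesicVectorSU2 l1 l2 l3 (a, b, c) ↔ ((b = 0 ∧ c = 0) ∨ (a = 0 ∧ c = 0) ∨ (a = 0 ∧ b = 0)) := by
  constructor
  · intro H
    have e1 := H (1, 0, 0)
    have e2 := H (0, 1, 0)
    have e3 := H (0, 0, 1)
    simp only [su2Bracket, su2Metric] at e1 e2 e3
    have hbc : b * c = 0 := by
      rcases mul_eq_zero.mp (show (l2 - l3) * (b * c) = 0 by linarith [e1]) with h | h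
      · exact absurd (by linarith) h23
      · exact h
    have hac : a * c = 0 := by
      rcases mul_eq_zero.mp (show (l3 - l1) * (a * c) = 0 by linarith [e2]) with h | h
      · exact absurd (by linarith) h13.symm
      · exact h
    have hab : a * b = 0 := by
      rcases mul_eq_zero.mp (show (l1 - l2) * (a * b) = 0 by linarith [e3]) with h | h
      · exact absurd (by linarith) h12
      · exact h
    rcases mul_eq_zero.mp hab with ha | hb
    · rcases mul_eq_zero.mp hac with ha' | hc
      · rcases mul_eq_zero.mp hbc with hb | hc
        · exact Or.inr (Or.inr ⟨ha, hb⟩)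
        · exact Or.inr (Or.inl ⟨ha, hc⟩)
      · exact Or.inr (Or.inl ⟨ha, hc⟩)
    · rcases mul_eq_zero.mp hbc with hb' | hc
      · rcases mul_eq_zero.mp hac with ha | hc
        · exact Or.inr (Or.inr ⟨ha, hb⟩)
        · exact Or.inl ⟨hb, hc⟩
      · exact Or.inl ⟨hb, hc⟩
  · rintro (⟨rfl, rfl⟩ | ⟨rfl, rfl⟩ | ⟨rfl, rfl⟩) W <;>
      simp only [su2Bracket, su2Metric] <;> ring
end

section
/- For the Lie group SU(2) with any left-invariant metric given by pairwise distinct parameters (λ₁, λ₂, λ₃) on the decomposition su(2) = m₁ ⊕ m₂ ⊕ m₃, the metric is not a g.o. metric: there exists a nonzero x ∈ su(2) that is not a geodesic vector; equivalently, some geodesics through the identity are not homogeneous. -/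
/-- For pairwise distinct positive parameters `(λ₁, λ₂, λ₃)`, the corresponding
left-invariant metric on `SU(2)` is not a g.o. metric: since the isotropy is trivial,
this means some nonzero `x ∈ su(2)` is not a geodesic vector. -/
theorem stmt14 (l1 l2 l3 : ℝ) (h1 : 0 < l1) (h2 : 0 < l2) (h3 : 0 < l3)
    (h12 : l1 ≠ l2) (h13 : l1 ≠ l3) (h23 : l2 ≠ l3) :
    ∃ x : ℝ × ℝ × ℝ, x ≠ 0 ∧ ¬ IsGeodesicVectorSU2 l1 l2 l3 x := by
  refine ⟨(1, 1, 1), by simp [Prod.ext_iff], fun h => ?_⟩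
  have := h (0, 0, 1)
  simp [su2Metric, su2Bracket] at this
  exact h12 (by linarith)
end

section
/- Let g = f ⊕ f ⊕ f ⊕ f for a Lie algebra f, and define k = {(X,X,X,X)}, m₁ = {(X,X,-X,-X)}, m₂ = {(X,-X,X,-X)}, m₃ = {(X,-X,-X,X)} (X ranging over f). Then g = k ⊕ m₁ ⊕ m₂ ⊕ m₃ as a direct sum of subspaces, and [mᵢ, mᵢ] ⊆ k for i = 1, 2, 3, while [m₁, m₂] ⊆ m₃, [m₁, m₃] ⊆ m₂, [m₂, m₃] ⊆ m₁. -/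
/-! Since the bracket of `f⁴` is componentwise, `⁅diag_ε X, diag_δ Y⁆ = diag_{εδ} ⁅X, Y⁆`; the four
sign vectors are the characters of the Klein four-group, so their pointwise products follow its
group law, which gives all the bracket relations. They are also the rows of the Hadamard matrix
`H` with `H² = 4`, and for the rows of any invertible matrix `H` the subspaces `diag_{H i}(f)` form
a direct sum decomposition of `f⁴`, the projections being weighted sums with the columns of `H⁻¹`
as weights. -/

section PiLie

variable (f : Type*) [LieRing f] [LieAlgebra ℝ f]

/-- Componentwise Lie ring structure on `f⁴ = f × f × f × f`. -/
instance piLieRing : LieRing (Fin 4 → f) where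
  bracket u v := fun i => ⁅u i, v i⁆
  add_lie u v w := by funext i; exact add_lie _ _ _
  lie_add u v w := by funext i; exact lie_add _ _ _
  lie_self u := by funext i; exact lie_self _
  leibniz_lie u v w := by funext i; exact leibniz_lie _ _ _

/-- Componentwise Lie algebra structure on `f⁴`. -/
instance piLieAlgebra : LieAlgebra ℝ (Fin 4 → f) where
  lie_smul c u v := by funext i; exact lie_smul _ _ _

/-- The "signed diagonal" embedding `f → f⁴`, `X ↦ (ε₀X, ε₁X, ε₂X, ε₃X)`. -/
def diagMap (ε : Fin 4 → ℝ) : f →ₗ[ℝ] (Fin 4 → f) :=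
  LinearMap.pi fun i => ε i • LinearMap.id

section Decomposition

variable {ι R M M' N : Type*} [Semiring R] [AddCommMonoid M] [Module R M]
  [AddCommMonoid M'] [Module R M'] [AddCommMonoid N] [Module R N]

theorem iSupIndep_range_of_comp_eq_zero (d : ι → M →ₗ[R] N) (π : ι → N →ₗ[R] M')
    (h_ne : ∀ i j, i ≠ j → π i ∘ₗ d j = 0) (h_inj : ∀ i, Function.Injective (π i ∘ₗ d i)) :
    iSupIndep fun i => LinearMap.range (d i) := by
  intro i
  rw [Submodule.disjoint_def]
  rintro _ ⟨X, rfl⟩ hX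
  have h_le_ker : (⨆ (j) (_ : j ≠ i), LinearMap.range (d j)) ≤ LinearMap.ker (π i) :=
    iSup₂_le fun j hj => LinearMap.range_le_ker_iff.mpr (h_ne i j (Ne.symm hj))
  have hX0 : X = 0 := h_inj i (by simpa using h_le_ker hX)
  rw [hX0, map_zero]

theorem iSup_range_eq_top_of_sum_comp_eq_id [Fintype ι] (d : ι → M →ₗ[R] N)
    (π : ι → N →ₗ[R] M) (h : ∑ i, d i ∘ₗ π i = LinearMap.id) :
    ⨆ i, LinearMap.range (d i) = ⊤ := by
  refine eq_top_iff.mpr fun v _ => ?_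
  rw [← LinearMap.id_apply (R := R) v, ← h, LinearMap.sum_apply]
  exact Submodule.sum_mem _ fun i _ => Submodule.mem_iSup_of_mem i (LinearMap.mem_range_self _ _)

end Decomposition

lemma diagMap_apply (ε : Fin 4 → ℝ) (X : f) (i : Fin 4) : diagMap f ε X i = ε i • X := rfl

lemma lie_diagMap_diagMap (ε δ : Fin 4 → ℝ) (X Y : f) :
    ⁅diagMap f ε X, diagMap f δ Y⁆ = diagMap f (ε * δ) ⁅X, Y⁆ := by
  funext i
  change ⁅ε i • X, δ i • Y⁆ = (ε i * δ i) • ⁅X, Y⁆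
  rw [smul_lie, lie_smul, smul_smul]

lemma lie_mem_range_diagMap {ε δ η : Fin 4 → ℝ} (hη : ε * δ = η) {x y : Fin 4 → f}
    (hx : x ∈ LinearMap.range (diagMap f ε)) (hy : y ∈ LinearMap.range (diagMap f δ)) :
    ⁅x, y⁆ ∈ LinearMap.range (diagMap f η) := by
  obtain ⟨X, rfl⟩ := hx
  obtain ⟨Y, rfl⟩ := hy
  exact ⟨⁅X, Y⁆, by rw [lie_diagMap_diagMap, hη]⟩

def weightedSum (c : Fin 4 → ℝ) : (Fin 4 → f) →ₗ[ℝ] f :=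
  ∑ l, c l • LinearMap.proj l

lemma weightedSum_apply (c : Fin 4 → ℝ) (v : Fin 4 → f) :
    weightedSum f c v = ∑ l, c l • v l := by
  simp [weightedSum]

lemma weightedSum_comp_diagMap (c ε : Fin 4 → ℝ) :
    weightedSum f c ∘ₗ diagMap f ε = (c ⬝ᵥ ε) • LinearMap.id := by
  ext X
  simp [weightedSum_apply, diagMap_apply, smul_smul, dotProduct, Finset.sum_smul]

theorem isInternal_range_diagMap {H : Matrix (Fin 4) (Fin 4) ℝ} (hH : IsUnit H) :
    DirectSum.IsInternal fun i => LinearMap.range (diagMap f (H i)) := by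
  obtain ⟨⟨H, G, hHG, hGH⟩, rfl⟩ := hH
  dsimp only
  have h_comp (i j : Fin 4) :
      weightedSum f (fun l => G l i) ∘ₗ diagMap f (H j) = (H * G) j i • LinearMap.id := by
    rw [weightedSum_comp_diagMap, dotProduct_comm, Matrix.mul_apply']
  refine (DirectSum.isInternal_submodule_iff_iSupIndep_and_iSup_eq_top _).mpr ⟨?_, ?_⟩
  · refine iSupIndep_range_of_comp_eq_zero _ (fun i => weightedSum f (fun l => G l i))
      (fun i j hij => ?_) (fun i => ?_)
    · rw [h_comp, hHG, Matrix.one_apply_ne hij.symm, zero_smul]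
    · rw [h_comp, hHG, Matrix.one_apply_eq, one_smul]
      exact Function.injective_id
  · refine iSup_range_eq_top_of_sum_comp_eq_id _ (fun i => weightedSum f (fun l => G l i)) ?_
    refine LinearMap.ext fun v => funext fun m => ?_
    have h_inv : ∑ l, (G * H) l m • v l = v m := by
      simp [hGH, Matrix.one_apply]
    refine .trans ?_ h_inv
    simp only [LinearMap.sum_apply, Finset.sum_apply, LinearMap.comp_apply, diagMap_apply,
      weightedSum_apply, Finset.smul_sum, smul_smul, Matrix.mul_apply, Finset.sum_smul]
    rw [Finset.sum_comm]
    simp only [mul_comm]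

def hadamard4 : Matrix (Fin 4) (Fin 4) ℝ :=
  !![1, 1, 1, 1; 1, 1, -1, -1; 1, -1, 1, -1; 1, -1, -1, 1]

lemma hadamard4_mul_self : hadamard4 * hadamard4 = (4 : ℝ) • 1 := by
  ext i j
  fin_cases i <;> fin_cases j <;> simp [hadamard4, Matrix.mul_apply, Fin.sum_univ_four] <;> norm_num

lemma isUnit_hadamard4 : IsUnit hadamard4 :=
  .of_mul_eq_one ((4 : ℝ)⁻¹ • hadamard4) <| by
    rw [Matrix.mul_smul, hadamard4_mul_self, smul_smul, inv_mul_cancel₀ four_ne_zero, one_smul]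

/-- For `g = f ⊕ f ⊕ f ⊕ f` with `k = {(X,X,X,X)}`, `m₁ = {(X,X,-X,-X)}`,
`m₂ = {(X,-X,X,-X)}`, `m₃ = {(X,-X,-X,X)}`, one has `g = k ⊕ m₁ ⊕ m₂ ⊕ m₃` as a
direct sum of subspaces, `[mᵢ,mᵢ] ⊆ k`, `[m₁,m₂] ⊆ m₃`, `[m₁,m₃] ⊆ m₂`, `[m₂,m₃] ⊆ m₁`. -/
theorem stmt17 :
    let k : Submodule ℝ (Fin 4 → f) := LinearMap.range (diagMap f ![1, 1, 1, 1])
    let m1 : Submodule ℝ (Fin 4 → f) := LinearMap.range (diagMap f ![1, 1, -1, -1])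
    let m2 : Submodule ℝ (Fin 4 → f) := LinearMap.range (diagMap f ![1, -1, 1, -1])
    let m3 : Submodule ℝ (Fin 4 → f) := LinearMap.range (diagMap f ![1, -1, -1, 1])
    (k ⊔ m1 ⊔ m2 ⊔ m3 = ⊤) ∧
    iSupIndep (![k, m1, m2, m3] : Fin 4 → Submodule ℝ (Fin 4 → f)) ∧
    (∀ x ∈ m1, ∀ y ∈ m1, ⁅x, y⁆ ∈ k) ∧
    (∀ x ∈ m2, ∀ y ∈ m2, ⁅x, y⁆ ∈ k) ∧
    (∀ x ∈ m3, ∀ y ∈ m3, ⁅x, y⁆ ∈ k) ∧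
    (∀ x ∈ m1, ∀ y ∈ m2, ⁅x, y⁆ ∈ m3) ∧
    (∀ x ∈ m1, ∀ y ∈ m3, ⁅x, y⁆ ∈ m2) ∧
    (∀ x ∈ m2, ∀ y ∈ m3, ⁅x, y⁆ ∈ m1) := by
  intro k m1 m2 m3
  have h_rows : ![k, m1, m2, m3] = fun i => LinearMap.range (diagMap f (hadamard4 i)) := by
    ext1 i
    fin_cases i <;> rfl
  have h_sup : k ⊔ m1 ⊔ m2 ⊔ m3 = ⨆ i, ![k, m1, m2, m3] i := by
    rw [← Finset.sup_univ_eq_iSup]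
    simp [Fin.univ_succ, sup_assoc]
  obtain ⟨h_indep, h_top⟩ := (DirectSum.isInternal_submodule_iff_iSupIndep_and_iSup_eq_top _).mp
    (isInternal_range_diagMap f isUnit_hadamard4)
  rw [← h_rows] at h_indep h_top
  refine ⟨h_sup.trans h_top, h_indep, ?_, ?_, ?_, ?_, ?_, ?_⟩ <;>
    exact fun x hx y hy =>
      lie_mem_range_diagMap f (by simp [funext_iff, Fin.forall_fin_succ]) hx hy

end PiLie
end

section
/- In so(n) (n ≥ 4) with k = span{e_{ij} : 3 ≤ i < j ≤ n}, m₁ = span{e₁₂}, m₂ = span{e_{1j} : 3 ≤ j ≤ n}, m₃ = span{e_{2j} : 3 ≤ j ≤ n}, one has so(n) = k ⊕ m₁ ⊕ m₂ ⊕ m₃ and [m₁, m₁] = 0 ⊆ k, [m₂, m₂] ⊆ k, [m₃, m₃] ⊆ k, [m₂, m₃] ⊆ k ⊕ m₁, [m₁, m₂] ⊆ m₃, [m₁, m₃] ⊆ m₂. -/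
/-!
Every skew-symmetric matrix is `½ ∑ A i j • e i j`, and each `e a b` with `a < b` lies in exactly
one of `k, m₁, m₂, m₃`, according to which of the blocks `{1}`, `{2}`, `{3, …, n}` contain `a` and
`b`. These four families are supported on pairwise disjoint sets of matrix entries, which gives the
direct sum. The bracket relations are read off from
`⁅e a b, e c d⁆ = δ b c • e a d + δ a d • e b c - δ b d • e a c - δ a c • e b d`
and bilinearity of the bracket.
-/

open Matrix

/-- `e a b = E a b - E b a` in so(n). -/
def eSo (n : ℕ) (a b : Fin n) : Matrix (Fin n) (Fin n) ℝ :=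
  Matrix.single a b 1 - Matrix.single b a 1

/-- `so(n)`: the real skew-symmetric `n × n` matrices, as a submodule. -/
def soN (n : ℕ) : Submodule ℝ (Matrix (Fin n) (Fin n) ℝ) where
  carrier := {A | Aᵀ = -A}
  add_mem' := by
    intro A B hA hB
    simp only [Set.mem_setOf_eq] at *
    rw [Matrix.transpose_add, hA, hB, neg_add]
  zero_mem' := by simp
  smul_mem' := by
    intro c A hA
    simp only [Set.mem_setOf_eq] at *
    rw [Matrix.transpose_smul, hA, smul_neg]

open Function

theorem lie_mem_of_mem_span {R A : Type*} [CommRing R] [Ring A] [Algebra R A]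
    {s t : Set A} {p : Submodule R A} (h : ∀ x ∈ s, ∀ y ∈ t, ⁅x, y⁆ ∈ p)
    {x y : A} (hx : x ∈ Submodule.span R s) (hy : y ∈ Submodule.span R t) : ⁅x, y⁆ ∈ p := by
  let commutator : A →ₗ[R] A →ₗ[R] A := LinearMap.mul R A - (LinearMap.mul R A).flip
  have hcomm (a b : A) : commutator a b = ⁅a, b⁆ := (Ring.lie_def a b).symm
  have hle : Submodule.map₂ commutator (Submodule.span R s) (Submodule.span R t) ≤ p := by
    rw [Submodule.map₂_span_span, Submodule.span_le]
    rintro _ ⟨a, ha, b, hb, rfl⟩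
    simpa only [hcomm, SetLike.mem_coe] using h a ha b hb
  exact hcomm x y ▸ Submodule.map₂_le.1 hle x hx y hy

section SupportedOn

variable {R m n : Type*} [Semiring R]

variable (R) in
def matrixSupportedOn (S : Set (m × n)) : Submodule R (Matrix m n R) where
  carrier := {A | ∀ i j, (i, j) ∉ S → A i j = 0}
  add_mem' hA hB i j h := by simp [hA i j h, hB i j h]
  zero_mem' _ _ _ := rfl
  smul_mem' c A hA i j h := by simp [hA i j h]

theorem matrixSupportedOn_mono {S T : Set (m × n)} (h : S ⊆ T) :
    matrixSupportedOn R S ≤ matrixSupportedOn R T :=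
  fun _ hA i j hij => hA i j (fun hS => hij (h hS))

theorem disjoint_matrixSupportedOn_compl (S : Set (m × n)) :
    Disjoint (matrixSupportedOn R S) (matrixSupportedOn R Sᶜ) := by
  refine disjoint_iff_inf_le.2 fun A ⟨hS, hSc⟩ => ?_
  ext i j
  by_cases h : (i, j) ∈ S
  · exact hSc i j (not_not.2 h)
  · exact hS i j h

theorem iSupIndep_matrixSupportedOn {ι : Type*} {σ : ι → Set (m × n)}
    (h : Pairwise (Disjoint on σ)) : iSupIndep fun t => matrixSupportedOn R (σ t) := by
  refine fun i => (disjoint_matrixSupportedOn_compl (σ i)).mono_right ?_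
  exact iSup₂_le fun j hj => matrixSupportedOn_mono ((h hj).subset_compl_right)

end SupportedOn

section eSo

variable {n : ℕ}

theorem eSo_swap (a b : Fin n) : eSo n b a = -eSo n a b := by
  simp [eSo]

theorem eSo_self (a : Fin n) : eSo n a a = 0 := by
  simp [eSo]

theorem eSo_mem_soN (a b : Fin n) : eSo n a b ∈ soN n := by
  change (eSo n a b)ᵀ = -eSo n a b
  rw [eSo, transpose_sub, transpose_single, transpose_single, neg_sub]

theorem lie_eSo_eSo (a b c d : Fin n) :
    ⁅eSo n a b, eSo n c d⁆ =
      (if b = c then eSo n a d else 0) + (if a = d then eSo n b c else 0)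
        - (if b = d then eSo n a c else 0) - (if a = c then eSo n b d else 0) := by
  have hmul (i j k l : Fin n) : single i j (1 : ℝ) * single k l 1 =
      if j = k then single i l 1 else 0 := by
    split_ifs with h
    · rw [h, single_mul_single_same, mul_one]
    · exact single_mul_single_of_ne (c := (1 : ℝ)) i j k h 1
  rw [Ring.lie_def]
  simp only [eSo, sub_mul, mul_sub, hmul]
  by_cases h1 : b = c <;> by_cases h2 : a = d <;> by_cases h3 : b = d <;> by_cases h4 : a = c <;>
    simp_all [eq_comm] <;> abel

theorem lie_eSo_eSo_of_ne {a b d : Fin n} (hab : a ≠ b) (had : a ≠ d) :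
    ⁅eSo n a b, eSo n a d⁆ = -eSo n b d := by
  rw [lie_eSo_eSo]
  by_cases hbd : b = d
  · subst hbd; simp [hab, hab.symm, eSo_self]
  · simp [hab.symm, had, hbd]

theorem eSo_mem_matrixSupportedOn {S : Set (Fin n × Fin n)} {a b : Fin n}
    (hab : (a, b) ∈ S) (hba : (b, a) ∈ S) : eSo n a b ∈ matrixSupportedOn ℝ S := by
  intro i j hij
  have h₁ : ¬(a = i ∧ b = j) := by rintro ⟨rfl, rfl⟩; exact hij hab
  have h₂ : ¬(b = i ∧ a = j) := by rintro ⟨rfl, rfl⟩; exact hij hba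
  simp [eSo, h₁, h₂]

theorem skew_eq_sum_eSo {A : Matrix (Fin n) (Fin n) ℝ} (hA : Aᵀ = -A) :
    A = (2⁻¹ : ℝ) • ∑ i, ∑ j, A i j • eSo n i j := by
  have hsum : ∑ i, ∑ j, A i j • single i j (1 : ℝ) = A := by
    conv_rhs => rw [matrix_eq_sum_single A]
    simp [smul_single]
  have hsum_swap : ∑ i, ∑ j, A i j • single j i (1 : ℝ) = Aᵀ := by
    rw [Finset.sum_comm]
    conv_rhs => rw [matrix_eq_sum_single Aᵀ]
    simp [smul_single]
  simp only [eSo, smul_sub, Finset.sum_sub_distrib, hsum, hsum_swap, hA]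
  module

theorem soN_le_of_eSo_mem {p : Submodule ℝ (Matrix (Fin n) (Fin n) ℝ)}
    (h : ∀ a b : Fin n, a < b → eSo n a b ∈ p) : soN n ≤ p := by
  have hall (a b : Fin n) : eSo n a b ∈ p := by
    rcases lt_trichotomy a b with hab | rfl | hba
    · exact h a b hab
    · rw [eSo_self]; exact p.zero_mem
    · rw [eSo_swap]; exact p.neg_mem (h b a hba)
  intro A hA
  rw [skew_eq_sum_eSo hA]
  exact p.smul_mem _ <| p.sum_mem fun i _ => p.sum_mem fun j _ => p.smul_mem _ (hall i j)

end eSo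

section Wallach

variable {n : ℕ}

open Submodule

def wallachK (n : ℕ) : Submodule ℝ (Matrix (Fin n) (Fin n) ℝ) :=
  span ℝ {A | ∃ i j : Fin n, 2 ≤ (i : ℕ) ∧ (i : ℕ) < (j : ℕ) ∧ A = eSo n i j}

/-- Indices are shifted down by one from the paper: `wallachM n 0` and `wallachM n 1` are `m₂` and
`m₃`. -/
def wallachM (n : ℕ) (a : Fin n) : Submodule ℝ (Matrix (Fin n) (Fin n) ℝ) :=
  span ℝ {A | ∃ j : Fin n, 2 ≤ (j : ℕ) ∧ A = eSo n a j}

theorem eSo_mem_wallachK {a b : Fin n} (ha : 2 ≤ (a : ℕ)) (hb : 2 ≤ (b : ℕ)) :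
    eSo n a b ∈ wallachK n := by
  rcases lt_trichotomy a b with hab | rfl | hba
  · exact subset_span ⟨a, b, ha, hab, rfl⟩
  · rw [eSo_self]; exact zero_mem _
  · rw [eSo_swap]; exact neg_mem (subset_span ⟨b, a, hb, hba, rfl⟩)

theorem eSo_mem_wallachM (a : Fin n) {j : Fin n} (hj : 2 ≤ (j : ℕ)) : eSo n a j ∈ wallachM n a :=
  subset_span ⟨j, hj, rfl⟩

theorem lie_wallachM_wallachM {a b : Fin n} (ha : (a : ℕ) < 2) (hb : (b : ℕ) < 2)
    {x y : Matrix (Fin n) (Fin n) ℝ} (hx : x ∈ wallachM n a) (hy : y ∈ wallachM n b) :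
    ⁅x, y⁆ ∈ wallachK n ⊔ span ℝ {eSo n a b} := by
  refine lie_mem_of_mem_span ?_ hx hy
  rintro _ ⟨j, hj, rfl⟩ _ ⟨l, hl, rfl⟩
  have hjb : j ≠ b := Fin.ne_of_val_ne (by omega)
  have hal : a ≠ l := Fin.ne_of_val_ne (by omega)
  rw [lie_eSo_eSo, if_neg hjb, if_neg hal, add_zero, zero_sub]
  refine sub_mem (neg_mem ?_) ?_
  · split_ifs
    exacts [mem_sup_right (mem_span_singleton_self _), zero_mem _]
  · split_ifs
    exacts [mem_sup_left (eSo_mem_wallachK hj hl), zero_mem _]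

theorem lie_wallachM_self {a : Fin n} (ha : (a : ℕ) < 2) {x y : Matrix (Fin n) (Fin n) ℝ}
    (hx : x ∈ wallachM n a) (hy : y ∈ wallachM n a) : ⁅x, y⁆ ∈ wallachK n := by
  simpa [eSo_self] using lie_wallachM_wallachM ha ha hx hy

theorem lie_span_eSo_wallachM {a b : Fin n} (ha : (a : ℕ) < 2) (hab : a ≠ b)
    {x y : Matrix (Fin n) (Fin n) ℝ}
    (hx : x ∈ span ℝ {eSo n a b}) (hy : y ∈ wallachM n a) : ⁅x, y⁆ ∈ wallachM n b := by
  refine lie_mem_of_mem_span ?_ hx hy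
  rintro _ rfl _ ⟨l, hl, rfl⟩
  have hal : a ≠ l := Fin.ne_of_val_ne (by omega)
  rw [lie_eSo_eSo_of_ne hab hal]
  exact neg_mem (eSo_mem_wallachM b hl)

theorem lie_span_eSo_wallachM' {a b : Fin n} (hb : (b : ℕ) < 2) (hab : a ≠ b)
    {x y : Matrix (Fin n) (Fin n) ℝ}
    (hx : x ∈ span ℝ {eSo n a b}) (hy : y ∈ wallachM n b) : ⁅x, y⁆ ∈ wallachM n a := by
  rw [← span_neg, Set.neg_singleton, ← eSo_swap] at hx
  exact lie_span_eSo_wallachM hb hab.symm hx hy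

theorem wallach_sup_eq_soN {i0 i1 : Fin n} (h0 : (i0 : ℕ) = 0) (h1 : (i1 : ℕ) = 1) :
    wallachK n ⊔ span ℝ {eSo n i0 i1} ⊔ wallachM n i0 ⊔ wallachM n i1 = soN n := by
  refine le_antisymm ?_ (soN_le_of_eSo_mem fun a b hab => ?_)
  · refine sup_le (sup_le (sup_le (span_le.2 ?_) (span_le.2 ?_)) (span_le.2 ?_)) (span_le.2 ?_)
    · rintro _ ⟨a, b, -, -, rfl⟩; exact eSo_mem_soN a b
    · rintro _ rfl; exact eSo_mem_soN i0 i1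
    · rintro _ ⟨j, -, rfl⟩; exact eSo_mem_soN i0 j
    · rintro _ ⟨j, -, rfl⟩; exact eSo_mem_soN i1 j
  have hab' : (a : ℕ) < b := hab
  by_cases ha : 2 ≤ (a : ℕ)
  · exact mem_sup_left <| mem_sup_left <| mem_sup_left <| subset_span ⟨a, b, ha, hab, rfl⟩
  obtain rfl | rfl : a = i0 ∨ a = i1 := by omega
  · by_cases hb : (b : ℕ) = 1
    · obtain rfl : b = i1 := Fin.ext (by omega)
      exact mem_sup_left <| mem_sup_left <| mem_sup_right <| mem_span_singleton_self _
    · exact mem_sup_left <| mem_sup_right <| eSo_mem_wallachM a (by omega)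
  · exact mem_sup_right <| eSo_mem_wallachM a (by omega)

theorem iSupIndep_wallach {i0 i1 : Fin n} (h0 : (i0 : ℕ) = 0) (h1 : (i1 : ℕ) = 1) :
    iSupIndep ![wallachK n, span ℝ {eSo n i0 i1}, wallachM n i0, wallachM n i1] := by
  let σ : Fin 4 → Set (Fin n × Fin n) := ![{p | 2 ≤ (p.1 : ℕ) ∧ 2 ≤ (p.2 : ℕ)},
    {p | (p.1 : ℕ) < 2 ∧ (p.2 : ℕ) < 2},
    {p | (p.1 : ℕ) = 0 ∧ 2 ≤ (p.2 : ℕ) ∨ 2 ≤ (p.1 : ℕ) ∧ (p.2 : ℕ) = 0},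
    {p | (p.1 : ℕ) = 1 ∧ 2 ≤ (p.2 : ℕ) ∨ 2 ≤ (p.1 : ℕ) ∧ (p.2 : ℕ) = 1}]
  have hσ : Pairwise (Disjoint on σ) := by
    intro s t hst
    fin_cases s <;> fin_cases t <;> simp_all [σ, onFun, Set.disjoint_left] <;> omega
  refine (iSupIndep_matrixSupportedOn hσ).mono fun t => ?_
  fin_cases t
  · refine span_le.2 ?_
    rintro _ ⟨a, b, ha, hab, rfl⟩
    exact eSo_mem_matrixSupportedOn (by simp [σ]; omega) (by simp [σ]; omega)
  · refine span_le.2 ?_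
    rintro _ rfl
    exact eSo_mem_matrixSupportedOn (by simp [σ, h0, h1]) (by simp [σ, h0, h1])
  · refine span_le.2 ?_
    rintro _ ⟨j, hj, rfl⟩
    exact eSo_mem_matrixSupportedOn (by simp [σ, h0]; omega) (by simp [σ, h0]; omega)
  · refine span_le.2 ?_
    rintro _ ⟨j, hj, rfl⟩
    exact eSo_mem_matrixSupportedOn (by simp [σ, h1]; omega) (by simp [σ, h1]; omega)

end Wallach

/-- The generalized Wallach structure of the Stiefel manifold `SO(n)/SO(n-2)` (`n ≥ 4`),
with indices `0, 1, …, n-1` standing for `1, 2, …, n`: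
`so(n) = k ⊕ m₁ ⊕ m₂ ⊕ m₃` with `k = span{e_{ij} : 3 ≤ i < j}`, `m₁ = span{e₁₂}`,
`m₂ = span{e_{1j} : j ≥ 3}`, `m₃ = span{e_{2j} : j ≥ 3}`, and the bracket relations
`[m₁,m₁] = 0 ⊆ k`, `[m₂,m₂] ⊆ k`, `[m₃,m₃] ⊆ k`, `[m₂,m₃] ⊆ k ⊔ m₁`,
`[m₁,m₂] ⊆ m₃`, `[m₁,m₃] ⊆ m₂`. -/
theorem stmt18 (n : ℕ) (hn : 4 ≤ n) :
    let i0 : Fin n := ⟨0, by omega⟩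
    let i1 : Fin n := ⟨1, by omega⟩
    let k : Submodule ℝ (Matrix (Fin n) (Fin n) ℝ) :=
      Submodule.span ℝ {A | ∃ i j : Fin n, 2 ≤ (i : ℕ) ∧ (i : ℕ) < (j : ℕ) ∧ A = eSo n i j}
    let m1 : Submodule ℝ (Matrix (Fin n) (Fin n) ℝ) := Submodule.span ℝ {eSo n i0 i1}
    let m2 : Submodule ℝ (Matrix (Fin n) (Fin n) ℝ) :=
      Submodule.span ℝ {A | ∃ j : Fin n, 2 ≤ (j : ℕ) ∧ A = eSo n i0 j}
    let m3 : Submodule ℝ (Matrix (Fin n) (Fin n) ℝ) :=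
      Submodule.span ℝ {A | ∃ j : Fin n, 2 ≤ (j : ℕ) ∧ A = eSo n i1 j}
    (k ⊔ m1 ⊔ m2 ⊔ m3 = soN n) ∧
    iSupIndep (![k, m1, m2, m3] : Fin 4 → Submodule ℝ (Matrix (Fin n) (Fin n) ℝ)) ∧
    (∀ x ∈ m1, ∀ y ∈ m1, ⁅x, y⁆ = (0 : Matrix (Fin n) (Fin n) ℝ)) ∧
    (∀ x ∈ m1, ∀ y ∈ m1, ⁅x, y⁆ ∈ k) ∧
    (∀ x ∈ m2, ∀ y ∈ m2, ⁅x, y⁆ ∈ k) ∧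
    (∀ x ∈ m3, ∀ y ∈ m3, ⁅x, y⁆ ∈ k) ∧
    (∀ x ∈ m2, ∀ y ∈ m3, ⁅x, y⁆ ∈ k ⊔ m1) ∧
    (∀ x ∈ m1, ∀ y ∈ m2, ⁅x, y⁆ ∈ m3) ∧
    (∀ x ∈ m1, ∀ y ∈ m3, ⁅x, y⁆ ∈ m2) := by
  intro i0 i1 k m1 m2 m3
  have h0 : (i0 : ℕ) = 0 := rfl
  have h1 : (i1 : ℕ) = 1 := rfl
  have h01 : i0 ≠ i1 := Fin.ne_of_val_ne (by omega)
  have m1_abelian (x : _) (hx : x ∈ m1) (y : _) (hy : y ∈ m1) : ⁅x, y⁆ = 0 := by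
    refine (Submodule.mem_bot ℝ).1 (lie_mem_of_mem_span ?_ hx hy)
    rintro _ rfl _ rfl
    rw [Ring.lie_def, sub_self]; exact zero_mem _
  refine ⟨wallach_sup_eq_soN h0 h1, iSupIndep_wallach h0 h1, m1_abelian,
    fun x hx y hy => m1_abelian x hx y hy ▸ k.zero_mem, ?_, ?_, ?_, ?_, ?_⟩
  · exact fun x hx y hy => lie_wallachM_self (by omega) hx hy
  · exact fun x hx y hy => lie_wallachM_self (by omega) hx hy
  · exact fun x hx y hy => lie_wallachM_wallachM (by omega) (by omega) hx hy
  · exact fun x hx y hy => lie_span_eSo_wallachM (by omega) h01 hx hy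
  · exact fun x hx y hy => lie_span_eSo_wallachM' (by omega) h01 hx hy
end
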